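/- Let D be a category with all pullbacks, let C be a full subcategory of D that is closed under isomorphism (equal to its essential image) and has the property that for every object A in C, if Hom(B, A) is nonempty then B is in C. Let D' be the full subcategory of D consisting of all objects not in C. Then the Grothendieck twist Tw(D') has all pullbacks. -/

import Mathlib

open CategoryTheory CategoryTheory.Limits

universe v u

/-- An object of the Grothendieck twist `Tw(D)`: a finite index type together with a
family of objects of `D`. -/
structure TwObj (D : Type u) [Category.{v} D] : Type (max u 1) where
  ι : Type
  [fin : Finite ι]
  obj : ι → D

attribute [instance] TwObj.fin

/-- A morphism of the Grothendieck twist `Tw(D)`: a function of index types together with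
componentwise morphisms of `D`. -/
structure TwHom {D : Type u} [Category.{v} D] (X Y : TwObj D) : Type (max v 1) where
  toFun : X.ι → Y.ι
  map : ∀ i, X.obj i ⟶ Y.obj (toFun i)

theorem TwHom.hext {D : Type u} [Category.{v} D] {X Y : TwObj D} {f g : TwHom X Y}
    (h1 : f.toFun = g.toFun) (h2 : HEq f.map g.map) : f = g := by
  cases f; cases g; cases h1; cases h2; rfl

instance (D : Type u) [Category.{v} D] : Category (TwObj D) where
  Hom X Y := TwHom X Y
  id X := ⟨id, fun i => 𝟙 _⟩
  comp f g := ⟨g.toFun ∘ f.toFun, fun i => f.map i ≫ g.map (f.toFun i)⟩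
  id_comp f := TwHom.hext rfl (heq_of_eq (funext fun i => Category.id_comp _))
  comp_id f := TwHom.hext rfl (heq_of_eq (funext fun i => Category.comp_id _))
  assoc f g h := TwHom.hext rfl (heq_of_eq (funext fun i => Category.assoc _ _ _))

/-!
Pullbacks in `Tw(E)` are computed componentwise: the pullback of `f : X ⟶ Z` and `g : Y ⟶ Z` is
indexed by the pairs `(i, j)` with `f i = g j` whose component cospan has a pullback in `E`, and
carries that pullback at `(i, j)`. Discarding the other pairs is harmless as soon as every cospan of
`E` admitting a cone has a pullback, because the components of a cone over `f, g` are such cones.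
In the full subcategory of objects outside `C`, a cospan with a cone at vertex `B` has its pullback
in `D` outside `C`: it receives a map from `B`, and `C` is closed under sources.
-/
theorem hasLimit_fullSubcategory_of_nonempty_cone {D : Type u} [Category.{v} D]
    {P : ObjectProperty D} {J : Type*} [Category J]
    (hP : ∀ {A B : D}, (A ⟶ B) → P A → P B) (F : J ⥤ P.FullSubcategory)
    [HasLimit (F ⋙ P.ι)] (hF : Nonempty (Cone F)) : HasLimit F := by
  obtain ⟨s⟩ := hF
  have : CreatesLimit F P.ι := createsLimitFullSubcategoryInclusion F
    (hP (limit.lift _ (P.ι.mapCone s)) s.pt.property)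
  exact hasLimit_of_created F P.ι

theorem pullback_condition_comp_eqToHom {E : Type u} [Category.{v} E] {a b c c' : E}
    (u : a ⟶ c) (w : b ⟶ c') (e : c' = c) [HasPullback u (w ≫ eqToHom e)] :
    (pullback.fst u (w ≫ eqToHom e) ≫ u) ≫ eqToHom e.symm = pullback.snd u _ ≫ w := by
  simp [pullback.condition]

namespace TwObj

variable {E : Type u} [Category.{v} E]

theorem hom_ext {X Y : TwObj E} {f g : X ⟶ Y} (h : f.toFun = g.toFun)
    (hmap : ∀ i, f.map i ≫ eqToHom (congrArg Y.obj (congrFun h i)) = g.map i) : f = g := by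
  obtain ⟨f, fmap⟩ := f
  obtain ⟨g, gmap⟩ := g
  obtain rfl : f = g := h
  simp only [eqToHom_refl, Category.comp_id] at hmap
  exact congrArg _ (funext hmap)

theorem map_comp_eqToHom_of_eq {X Y : TwObj E} {f g : X ⟶ Y} (h : f = g) (i : X.ι)
    (e : Y.obj (f.toFun i) = Y.obj (g.toFun i)) : f.map i ≫ eqToHom e = g.map i := by
  subst h
  simp

variable {X Y Z : TwObj E} (f : X ⟶ Z) (g : Y ⟶ Z)

def PullbackIndex : Type :=
  {p : X.ι × Y.ι // ∃ h : f.toFun p.1 = g.toFun p.2,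
    HasPullback (f.map p.1) (g.map p.2 ≫ eqToHom (congrArg Z.obj h.symm))}

instance : Finite (PullbackIndex f g) := Subtype.finite

noncomputable def pullbackObj : TwObj E where
  ι := PullbackIndex f g
  obj p := haveI := p.2.choose_spec; pullback (f.map p.1.1) (g.map p.1.2 ≫ eqToHom _)

noncomputable def pullbackFst : pullbackObj f g ⟶ X :=
  ⟨fun p => p.1.1, fun p => haveI := p.2.choose_spec; pullback.fst _ _⟩

noncomputable def pullbackSnd : pullbackObj f g ⟶ Y :=
  ⟨fun p => p.1.2, fun p => haveI := p.2.choose_spec; pullback.snd _ _⟩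

theorem pullback_condition : pullbackFst f g ≫ f = pullbackSnd f g ≫ g :=
  hom_ext (funext fun p => p.2.choose) fun p =>
    @pullback_condition_comp_eqToHom _ _ _ _ _ _ _ _ _ p.2.choose_spec

variable {f g}

theorem cone_toFun_condition (s : PullbackCone f g) (l : s.pt.ι) :
    f.toFun (s.fst.toFun l) = g.toFun (s.snd.toFun l) :=
  congrFun (congrArg TwHom.toFun s.condition) l

theorem cone_map_condition (s : PullbackCone f g) (l : s.pt.ι) :
    s.fst.map l ≫ f.map (s.fst.toFun l) =
      s.snd.map l ≫ g.map (s.snd.toFun l) ≫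
        eqToHom (congrArg Z.obj (cone_toFun_condition s l).symm) :=
  (map_comp_eqToHom_of_eq s.condition.symm l _).symm.trans (Category.assoc _ _ _)

section Lift

variable (hE : ∀ {a b c : E} (u : a ⟶ c) (w : b ⟶ c),
  Nonempty (PullbackCone u w) → HasPullback u w)
include hE

theorem hasPullback_cone_component (s : PullbackCone f g) (l : s.pt.ι) :
    HasPullback (f.map (s.fst.toFun l))
      (g.map (s.snd.toFun l) ≫ eqToHom (congrArg Z.obj (cone_toFun_condition s l).symm)) :=
  hE _ _ ⟨PullbackCone.mk _ _ (cone_map_condition s l)⟩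

noncomputable def pullbackLift (s : PullbackCone f g) : s.pt ⟶ pullbackObj f g where
  toFun l := ⟨(s.fst.toFun l, s.snd.toFun l), cone_toFun_condition s l,
    hasPullback_cone_component hE s l⟩
  map l := haveI := hasPullback_cone_component hE s l
    pullback.lift _ _ (cone_map_condition s l)

-- Instance search cannot see the `HasPullback` proof stored in an index of `pullbackObj`,
-- so it is passed explicitly.
theorem pullbackLift_fst (s : PullbackCone f g) : pullbackLift hE s ≫ pullbackFst f g = s.fst :=
  hom_ext rfl fun l => (Category.comp_id _).trans
    (@pullback.lift_fst _ _ _ _ _ _ _ _ (hasPullback_cone_component hE s l) _ _ _)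

theorem pullbackLift_snd (s : PullbackCone f g) : pullbackLift hE s ≫ pullbackSnd f g = s.snd :=
  hom_ext rfl fun l => (Category.comp_id _).trans
    (@pullback.lift_snd _ _ _ _ _ _ _ _ (hasPullback_cone_component hE s l) _ _ _)

theorem pullbackLift_unique (s : PullbackCone f g) (m : s.pt ⟶ pullbackObj f g)
    (h₁ : m ≫ pullbackFst f g = s.fst) (h₂ : m ≫ pullbackSnd f g = s.snd) :
    m = pullbackLift hE s := by
  obtain ⟨m, mmap⟩ := m
  obtain rfl : m = (pullbackLift hE s).toFun := funext fun l => Subtype.ext <|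
    Prod.ext (congrFun (congrArg TwHom.toFun h₁) l) (congrFun (congrArg TwHom.toFun h₂) l)
  refine hom_ext rfl fun l => (Category.comp_id _).trans ?_
  refine @pullback.hom_ext _ _ _ _ _ _ _ (hasPullback_cone_component hE s l) _ _ _ ?_ ?_
  · exact (Category.comp_id _).symm.trans <| (map_comp_eqToHom_of_eq h₁ l rfl).trans
      (@pullback.lift_fst _ _ _ _ _ _ _ _ (hasPullback_cone_component hE s l) _ _ _).symm
  · exact (Category.comp_id _).symm.trans <| (map_comp_eqToHom_of_eq h₂ l rfl).trans
      (@pullback.lift_snd _ _ _ _ _ _ _ _ (hasPullback_cone_component hE s l) _ _ _).symm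

theorem hasPullbacks_of_nonempty_pullbackCone : HasPullbacks (TwObj E) := by
  refine @hasPullbacks_of_hasLimit_cospan _ _ fun {X Y Z f g} => HasLimit.mk
    ⟨PullbackCone.mk _ _ (pullback_condition f g), ?_⟩
  exact PullbackCone.IsLimit.mk _ (pullbackLift hE) (pullbackLift_fst hE) (pullbackLift_snd hE)
    (pullbackLift_unique hE)

end Lift

end TwObj

theorem tw_remove_sources_hasPullbacks_general (D : Type u) [Category.{v} D] [HasPullbacks D]
    (C : Set D)
    (hC_src : ∀ A ∈ C, ∀ B : D, Nonempty (B ⟶ A) → B ∈ C) :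
    HasPullbacks (TwObj (ObjectProperty.FullSubcategory (fun X : D => X ∉ C))) :=
  TwObj.hasPullbacks_of_nonempty_pullbackCone fun _ _ hcone =>
    hasLimit_fullSubcategory_of_nonempty_cone (fun u hB hA => hB (hC_src _ hA _ ⟨u⟩)) _ hcone

/-- Let `D` have all pullbacks, and let `C` be a class of objects of `D`, closed under
isomorphism, such that any object admitting a morphism into an object of `C` is itself in
`C`.  Then the Grothendieck twist of the full subcategory `D'` of objects not in `C` has
all pullbacks. -/
theorem tw_remove_sources_hasPullbacks (D : Type u) [Category.{v} D] [HasPullbacks D]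
    (C : Set D)
    (hC_iso : ∀ A ∈ C, ∀ B : D, Nonempty (B ≅ A) → B ∈ C)
    (hC_src : ∀ A ∈ C, ∀ B : D, Nonempty (B ⟶ A) → B ∈ C) :
    HasPullbacks (TwObj (ObjectProperty.FullSubcategory (fun X : D => X ∉ C))) :=
  tw_remove_sources_hasPullbacks_general D C hC_src
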